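/- arXiv:2602.09998 — 3 statements merged into one kernel-verified Lean document; each statement's English description precedes it below -/
import Mathlib

section
/- For every κ > 0 there exists D_min(κ) > 0 such that for all 0 < D < D_min(κ), the infimum of J(u) = (D/2)∫₀¹|u_x|² + (1/2)∫₀¹u² − κ log(∫₀¹e^u) over W^{1,2}(𝕋) is strictly less than −κ²/2 = J(κ̄), where κ̄ denotes the constant function equal to κ. Consequently the constant solution is not a global minimizer for small diffusion. -/
/-!
Already at `D = 0` the functional is unbounded below. The periodic bump
`u = M exp(-(sin πx / w)²)` has `∫ u² ≲ M² w` (Jordan's inequality compares it with a Gaussian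
on `[-1/2, 1/2]`), while `u ≥ M/e` on `[0, w/π]` gives `log ∫ eᵘ ≥ M/e + log (w/π)`. With
`M = t²`, `w = t⁻⁴` the first term stays bounded and the second grows like `t²`. The gradient
term of a fixed `u` is `D` times a fixed number, so it does not spoil the strict inequality for
small `D`.
-/

open Real MeasureTheory Filter

/-- Membership in the (smooth dense subclass of the) periodic Sobolev space `W^{1,2}(𝕋)`. -/
def W12 (u : ℝ → ℝ) : Prop := ContDiff ℝ 1 u ∧ Function.Periodic u 1

noncomputable def J (D κ : ℝ) (u : ℝ → ℝ) : ℝ :=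
  (D / 2) * (∫ x in (0:ℝ)..1, (deriv u x) ^ 2)
    + (1 / 2) * (∫ x in (0:ℝ)..1, (u x) ^ 2)
    - κ * Real.log (∫ x in (0:ℝ)..1, Real.exp (u x))

noncomputable def bump (M w x : ℝ) : ℝ := M * exp (-(sin (π * x) / w) ^ 2)

theorem contDiff_bump (M w : ℝ) : ContDiff ℝ 1 (bump M w) := by
  unfold bump; fun_prop

theorem periodic_bump (M w : ℝ) : Function.Periodic (bump M w) 1 := by
  intro x
  simp only [bump, mul_add, mul_one, sin_add_pi, neg_div, neg_sq]

theorem W12_bump (M w : ℝ) : W12 (bump M w) := ⟨contDiff_bump M w, periodic_bump M w⟩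

theorem J_eq_J_zero_add (D κ : ℝ) (u : ℝ → ℝ) :
    J D κ u = J 0 κ u + D / 2 * ∫ x in (0:ℝ)..1, (deriv u x) ^ 2 := by
  unfold J; ring

theorem J_const (D κ : ℝ) : J D κ (fun _ => κ) = -κ ^ 2 / 2 := by
  simp only [J, deriv_const', intervalIntegral.integral_const, smul_eq_mul, sub_zero, one_mul,
    Real.log_exp]
  ring

theorem four_mul_sq_le_sin_pi_mul_sq {x : ℝ} (hx : |x| ≤ 1 / 2) : 4 * x ^ 2 ≤ sin (π * x) ^ 2 := by
  have h := mul_abs_le_abs_sin (x := π * x) (by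
    rw [abs_mul, abs_of_pos pi_pos]; nlinarith [pi_pos])
  rw [abs_mul, abs_of_pos pi_pos, ← mul_assoc, div_mul_cancel₀ _ pi_ne_zero] at h
  nlinarith [abs_nonneg x, sq_abs x, sq_abs (sin (π * x))]

theorem integral_bump_sq_le (M : ℝ) {w : ℝ} (hw : 0 < w) :
    ∫ x in (0:ℝ)..1, bump M w x ^ 2 ≤ M ^ 2 * (w * √(π / 8)) := by
  set g : ℝ → ℝ := fun x => M ^ 2 * exp (-(8 / w ^ 2) * x ^ 2)
  have hcont : Continuous fun x => bump M w x ^ 2 := ((contDiff_bump M w).continuous).pow 2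
  have hg : Integrable g := (integrable_exp_neg_mul_sq (by positivity)).const_mul _
  have hle : ∀ x ∈ Set.Icc (-(1/2) : ℝ) (1/2), bump M w x ^ 2 ≤ g x := by
    intro x hx
    have hs := four_mul_sq_le_sin_pi_mul_sq (abs_le.2 hx)
    calc bump M w x ^ 2 = M ^ 2 * exp (-(2 / w ^ 2) * sin (π * x) ^ 2) := by
          rw [bump, mul_pow, ← exp_nat_mul]; ring_nf
      _ ≤ M ^ 2 * exp (-(8 / w ^ 2) * x ^ 2) := by
          gcongr ?_ * exp ?_
          rw [show -(8 / w ^ 2) * x ^ 2 = -(2 / w ^ 2) * (4 * x ^ 2) by ring]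
          exact mul_le_mul_of_nonpos_left hs (by simp only [neg_nonpos]; positivity)
  calc ∫ x in (0:ℝ)..1, bump M w x ^ 2
      = ∫ x in (-(1/2) : ℝ)..(-(1/2) + 1), bump M w x ^ 2 := by
        simpa using ((periodic_bump M w).comp (· ^ 2)).intervalIntegral_add_eq 0 (-(1/2))
    _ ≤ ∫ x in (-(1/2) : ℝ)..(1/2), g x := by
        rw [show (-(1/2) : ℝ) + 1 = 1/2 by norm_num]
        exact intervalIntegral.integral_mono_on (by norm_num) (hcont.intervalIntegrable _ _)
          hg.intervalIntegrable hle
    _ ≤ ∫ x, g x := by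
        rw [intervalIntegral.integral_of_le (by norm_num)]
        exact setIntegral_le_integral hg (.of_forall fun x => by positivity)
    _ = M ^ 2 * (w * √(π / 8)) := by
        rw [integral_const_mul, integral_gaussian, div_div_eq_mul_div, mul_comm π,
          mul_div_assoc, sqrt_mul (sq_nonneg w), sqrt_sq hw.le]

theorem mul_exp_le_integral_exp_bump {M w : ℝ} (hM : 0 ≤ M) (hw : 0 < w) (hwπ : w ≤ π) :
    w / π * exp (M * exp (-1)) ≤ ∫ x in (0:ℝ)..1, exp (bump M w x) := by
  have hcont : Continuous fun x => exp (bump M w x) :=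
    continuous_exp.comp (contDiff_bump M w).continuous
  have hle : ∀ x ∈ Set.Icc 0 (w / π), exp (M * exp (-1)) ≤ exp (bump M w x) := by
    rintro x ⟨hx0, hxw⟩
    have hsin : (sin (π * x) / w) ^ 2 ≤ 1 := by
      rw [div_pow, div_le_one (by positivity)]
      refine sin_sq_le_sq.trans (pow_le_pow_left₀ (by positivity) ?_ 2)
      rwa [le_div_iff₀' pi_pos] at hxw
    unfold bump
    gcongr
  calc w / π * exp (M * exp (-1))
      = ∫ _ in (0:ℝ)..(w / π), exp (M * exp (-1)) := by simp
    _ ≤ ∫ x in (0:ℝ)..(w / π), exp (bump M w x) :=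
        intervalIntegral.integral_mono_on (by positivity) intervalIntegrable_const
          (hcont.intervalIntegrable _ _) hle
    _ ≤ ∫ x in (0:ℝ)..1, exp (bump M w x) :=
        intervalIntegral.integral_mono_interval le_rfl (by positivity) ((div_le_one pi_pos).2 hwπ)
          (.of_forall fun x => (exp_pos _).le) (hcont.intervalIntegrable _ _)

theorem J_zero_bump_le {κ M w : ℝ} (hκ : 0 ≤ κ) (hM : 0 ≤ M) (hw : 0 < w) (hwπ : w ≤ π) :
    J 0 κ (bump M w) ≤ M ^ 2 * (w * √(π / 8)) / 2 - κ * (log (w / π) + M * exp (-1)) := by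
  have hlog : log (w / π) + M * exp (-1) ≤ log (∫ x in (0:ℝ)..1, exp (bump M w x)) := by
    rw [← log_exp (M * exp (-1)), ← log_mul (by positivity) (exp_pos _).ne']
    exact log_le_log (by positivity) (mul_exp_le_integral_exp_bump hM hw hwπ)
  unfold J
  linarith [integral_bump_sq_le M hw, mul_le_mul_of_nonneg_left hlog hκ]

theorem exists_J_zero_lt {κ : ℝ} (hκ : 0 < κ) (c : ℝ) : ∃ u, W12 u ∧ J 0 κ u < c := by
  set t := 12 + 3 * (|c| + 1) / κ with ht
  have ht12 : 12 ≤ t := le_add_of_nonneg_right (by positivity)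
  have hgrowth : κ * (t ^ 2 / 3 - 4 * t) = t * (|c| + 1) := by
    rw [ht]; field_simp; ring
  have hw : 0 < (t ^ 4)⁻¹ := by positivity
  have hwπ : (t ^ 4)⁻¹ ≤ π :=
    (inv_le_one_of_one_le₀ (one_le_pow₀ (by linarith))).trans (by linarith [pi_gt_three])
  refine ⟨bump (t ^ 2) (t ^ 4)⁻¹, W12_bump _ _, ?_⟩
  have hmass : (t ^ 2) ^ 2 * ((t ^ 4)⁻¹ * √(π / 8)) / 2 ≤ 1 / 2 := by
    rw [← pow_mul, ← mul_assoc, mul_inv_cancel₀ (by positivity), one_mul]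
    gcongr
    exact sqrt_le_one.2 (by linarith [pi_lt_four])
  have hlog : -4 * t + 1 ≤ log ((t ^ 4)⁻¹ / π) := by
    rw [log_div hw.ne' pi_ne_zero, log_inv, log_pow]
    push_cast
    linarith [log_le_sub_one_of_pos (by linarith : 0 < t), log_le_sub_one_of_pos pi_pos,
      pi_lt_four]
  have hexp : t ^ 2 / 3 ≤ t ^ 2 * exp (-1) := by
    rw [div_eq_mul_inv, exp_neg]
    gcongr
    linarith [exp_one_lt_d9]
  have hbound := mul_le_mul_of_nonneg_left (add_le_add hlog hexp) hκ.le
  have hbig : 12 * (|c| + 1) ≤ t * (|c| + 1) := by gcongr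
  have hJ := J_zero_bump_le hκ.le (by positivity : (0:ℝ) ≤ t ^ 2) hw hwπ
  linarith [neg_abs_le c, abs_nonneg c]

theorem exists_pos_forall_J_lt {κ c : ℝ} {u : ℝ → ℝ} (h : J 0 κ u < c) :
    ∃ Dmin, 0 < Dmin ∧ ∀ D, 0 ≤ D → D < Dmin → J D κ u < c := by
  set A := ∫ x in (0:ℝ)..1, (deriv u x) ^ 2
  have hA : 0 ≤ A := intervalIntegral.integral_nonneg zero_le_one fun _ _ => sq_nonneg _
  refine ⟨(c - J 0 κ u) / (A / 2 + 1), by apply div_pos <;> linarith, fun D hD hDlt => ?_⟩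
  rw [lt_div_iff₀ (by positivity)] at hDlt
  rw [J_eq_J_zero_add]
  linarith

/-- For every `κ > 0` there is `D_min(κ) > 0` such that for `0 < D < D_min(κ)`,
the constant state `u ≡ κ` (with `J(κ̄) = −κ²/2`) is not a global minimizer:
the infimum of `J` is strictly below `−κ²/2`. -/
theorem stmt6 (κ : ℝ) (hκ : 0 < κ) :
    ∃ Dmin : ℝ, 0 < Dmin ∧ ∀ D : ℝ, 0 < D → D < Dmin →
      J D κ (fun _ => κ) = -κ ^ 2 / 2 ∧
      ∃ u : ℝ → ℝ, W12 u ∧ J D κ u < -κ ^ 2 / 2 := by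
  obtain ⟨u, hu, hJu⟩ := exists_J_zero_lt hκ (-κ ^ 2 / 2)
  obtain ⟨Dmin, hDmin, hJ⟩ := exists_pos_forall_J_lt hJu
  exact ⟨Dmin, hDmin, fun D hD hDlt => ⟨J_const D κ, u, hu, hJ D hD.le hDlt⟩⟩
end

section
/- Fix κ > 0 and N ∈ ℕ, and let φ_N(x) = κ + Σ_{k=1}^N a_k √2 cos(2πkx) with a_k = √2κ/(1+Dμ_k), μ_k = 4π²k². Then J(φ_N) ≤ −κ²/2 − κ²(√2−1)·N/(1+Dμ_N) + κ log(4N), where J(u) = (D/2)∫₀¹|u_x|² + (1/2)∫₀¹u² − κ log(∫₀¹e^u). -/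
open Real MeasureTheory Filter

/-!
The functions `√2 cos(2πkx + θ)`, `k ≥ 1`, are orthonormal and have mean zero on `[0, 1]`, and
differentiation turns the phase `θ` into `θ + π/2`. Hence the quadratic part of `J(φ_N)` is
`κ²/2 + κ² Σ 1/(1 + Dμ_k)`. For the logarithmic part, on `|x| ≤ 1/(8N)` every `√2 cos(2πkx)` with
`k ≤ N` is at least `1`, so `φ_N ≥ κ + Σ a_k` there; by periodicity this window of length `1/(4N)`
may be placed inside the period, giving `∫ e^{φ_N} ≥ e^{κ + Σ a_k}/(4N)`. It remains to bound each
`1/(1 + Dμ_k)` below by `1/(1 + Dμ_N)`.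
-/

open Finset

lemma integral_cos_two_pi_int_mul_add {n : ℤ} (hn : n ≠ 0) (c : ℝ) :
    ∫ x in (0:ℝ)..1, cos (2 * π * n * x + c) = 0 := by
  have h : 2 * π * (n : ℝ) ≠ 0 := by
    have := pi_ne_zero
    have : (n : ℝ) ≠ 0 := by exact_mod_cast hn
    positivity
  rw [intervalIntegral.integral_comp_mul_add cos h, integral_cos, mul_one, mul_zero, zero_add,
    add_comm, show 2 * π * (n : ℝ) = n * (2 * π) by ring, sin_add_int_mul_two_pi, sub_self, smul_zero]

lemma integral_cos_mul_cos (θ : ℝ) {j k : ℕ} (hj : 1 ≤ j) (hk : 1 ≤ k) :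
    ∫ x in (0:ℝ)..1, cos (2 * π * j * x + θ) * cos (2 * π * k * x + θ)
      = if j = k then 1 / 2 else 0 := by
  have hprod : ∀ x : ℝ, cos (2 * π * j * x + θ) * cos (2 * π * k * x + θ)
      = (cos (2 * π * ((j - k : ℤ) : ℝ) * x + 0)
        + cos (2 * π * ((j + k : ℤ) : ℝ) * x + 2 * θ)) / 2 := by
    intro x
    push_cast
    rw [show 2 * π * ((j : ℝ) - k) * x + 0 = (2 * π * j * x + θ) - (2 * π * k * x + θ) by ring,
      show 2 * π * ((j : ℝ) + k) * x + 2 * θ = (2 * π * j * x + θ) + (2 * π * k * x + θ) by ring,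
      cos_sub (2 * π * j * x + θ), cos_add (2 * π * j * x + θ)]
    ring
  simp_rw [hprod]
  rw [intervalIntegral.integral_div,
    intervalIntegral.integral_add (Continuous.intervalIntegrable (by fun_prop) _ _)
      (Continuous.intervalIntegrable (by fun_prop) _ _),
    integral_cos_two_pi_int_mul_add (by omega) (2 * θ)]
  split_ifs with hjk
  · subst hjk
    simp
  · rw [integral_cos_two_pi_int_mul_add (by omega)]
    simp

section CosSum

variable (N : ℕ) (b : ℕ → ℝ) (θ : ℝ)

noncomputable def cosSum (x : ℝ) : ℝ :=
  ∑ k ∈ Icc 1 N, b k * cos (2 * π * k * x + θ)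

lemma continuous_cosSum : Continuous (cosSum N b θ) := by
  unfold cosSum
  fun_prop

lemma cosSum_periodic : Function.Periodic (cosSum N b θ) 1 := fun x => by
  refine sum_congr rfl fun k _ => ?_
  rw [show 2 * π * k * (x + 1) + θ = 2 * π * k * x + θ + k * (2 * π) by ring,
    cos_add_nat_mul_two_pi]

lemma hasDerivAt_cosSum (x : ℝ) :
    HasDerivAt (cosSum N b θ) (cosSum N (fun k : ℕ => 2 * π * k * b k) (θ + π / 2) x) x := by
  unfold cosSum
  refine (HasDerivAt.fun_sum fun (k : ℕ) _ =>
    (((hasDerivAt_id' x).const_mul (2 * π * k)).add_const θ).cos.const_mul (b k)).congr_deriv ?_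
  refine sum_congr rfl fun k _ => ?_
  rw [← add_assoc, cos_add_pi_div_two]
  ring

lemma integral_cosSum : ∫ x in (0:ℝ)..1, cosSum N b θ x = 0 := by
  unfold cosSum
  rw [intervalIntegral.integral_finsetSum fun k _ =>
    Continuous.intervalIntegrable (by fun_prop) _ _]
  refine sum_eq_zero fun k hk => ?_
  have hk0 : (k : ℤ) ≠ 0 := by have := (mem_Icc.1 hk).1; omega
  rw [intervalIntegral.integral_const_mul, ← Int.cast_natCast,
    integral_cos_two_pi_int_mul_add hk0, mul_zero]

lemma integral_cosSum_sq :
    ∫ x in (0:ℝ)..1, cosSum N b θ x ^ 2 = ∑ k ∈ Icc 1 N, b k ^ 2 / 2 := by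
  unfold cosSum
  simp_rw [sq, sum_mul_sum, mul_mul_mul_comm]
  rw [intervalIntegral.integral_finsetSum fun j _ =>
    Continuous.intervalIntegrable (by fun_prop) _ _]
  refine sum_congr rfl fun j hj => ?_
  rw [intervalIntegral.integral_finsetSum fun k _ =>
    Continuous.intervalIntegrable (by fun_prop) _ _]
  simp_rw [intervalIntegral.integral_const_mul]
  rw [sum_congr rfl fun k hk => by
    rw [integral_cos_mul_cos θ (mem_Icc.1 hj).1 (mem_Icc.1 hk).1]]
  simp only [mul_ite, mul_zero, sum_ite_eq, hj, if_true]
  ring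

end CosSum

lemma J_const_add_cosSum (D κ : ℝ) (N : ℕ) (b : ℕ → ℝ) (θ : ℝ) :
    J D κ (fun x => κ + cosSum N b θ x)
      = κ ^ 2 / 2 + ∑ k ∈ Icc 1 N, (1 + D * (4 * π ^ 2 * (k : ℝ) ^ 2)) * b k ^ 2 / 4
        - κ * log (∫ x in (0:ℝ)..1, exp (κ + cosSum N b θ x)) := by
  have hderiv : deriv (fun x => κ + cosSum N b θ x)
      = cosSum N (fun k : ℕ => 2 * π * k * b k) (θ + π / 2) :=
    funext fun x => ((hasDerivAt_cosSum N b θ x).const_add κ).deriv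
  have hsq : ∫ x in (0:ℝ)..1, (κ + cosSum N b θ x) ^ 2
      = κ ^ 2 + ∑ k ∈ Icc 1 N, b k ^ 2 / 2 := by
    have hc := continuous_cosSum N b θ
    simp_rw [add_sq]
    rw [intervalIntegral.integral_add (Continuous.intervalIntegrable (by fun_prop) _ _)
        (Continuous.intervalIntegrable (by fun_prop) _ _),
      intervalIntegral.integral_add (Continuous.intervalIntegrable (by fun_prop) _ _)
        (Continuous.intervalIntegrable (by fun_prop) _ _),
      integral_cosSum_sq, intervalIntegral.integral_const_mul, integral_cosSum]
    simp
  have hquad : D / 2 * ∑ k ∈ Icc 1 N, (2 * π * k * b k) ^ 2 / 2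
        + 1 / 2 * ∑ k ∈ Icc 1 N, b k ^ 2 / 2
      = ∑ k ∈ Icc 1 N, (1 + D * (4 * π ^ 2 * (k : ℝ) ^ 2)) * b k ^ 2 / 4 := by
    rw [mul_sum, mul_sum, ← sum_add_distrib]
    exact sum_congr rfl fun k _ => by ring
  unfold J
  rw [hderiv, integral_cosSum_sq, hsq]
  linear_combination hquad

lemma mul_le_integral_of_periodic {f : ℝ → ℝ} (hf : Continuous f) (hper : Function.Periodic f 1)
    (hf0 : 0 ≤ f) {l m : ℝ} (hl0 : 0 ≤ l) (hl : l ≤ 1 / 2) (hm : ∀ x ∈ Set.Icc (-l) l, m ≤ f x) :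
    2 * l * m ≤ ∫ x in (0:ℝ)..1, f x :=
  calc 2 * l * m = ∫ _ in -l..l, m := by rw [intervalIntegral.integral_const, smul_eq_mul]; ring
    _ ≤ ∫ x in -l..l, f x := intervalIntegral.integral_mono_on (by linarith) intervalIntegrable_const
        (hf.intervalIntegrable _ _) hm
    _ ≤ ∫ x in -(1 / 2)..-(1 / 2) + 1, f x :=
        intervalIntegral.integral_mono_interval (by linarith) (by linarith) (by linarith)
          (Eventually.of_forall hf0) (hf.intervalIntegrable _ _)
    _ = ∫ x in (0:ℝ)..0 + 1, f x := hper.intervalIntegral_add_eq _ _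
    _ = ∫ x in (0:ℝ)..1, f x := by rw [zero_add]

lemma sqrt_two_div_two_le_cos {y : ℝ} (hy : |y| ≤ π / 4) : √2 / 2 ≤ cos y := by
  rw [← cos_pi_div_four, ← cos_abs y]
  exact cos_le_cos_of_nonneg_of_le_pi (abs_nonneg y) (by linarith [pi_pos]) hy

lemma sqrt_two_div_two_mul_sum_le_cosSum {N : ℕ} {b : ℕ → ℝ} (hb : ∀ k, 0 ≤ b k) {x : ℝ}
    (hx : |x| ≤ 1 / (8 * N)) : √2 / 2 * ∑ k ∈ Icc 1 N, b k ≤ cosSum N b 0 x := by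
  rw [mul_sum]
  refine sum_le_sum fun k hk => ?_
  obtain ⟨hk1, hkN⟩ := mem_Icc.1 hk
  have hN : (0 : ℝ) < N := by exact_mod_cast (by omega : 0 < N)
  have hkN' : (k : ℝ) ≤ N := by exact_mod_cast hkN
  have harg : |2 * π * k * x + 0| ≤ π / 4 :=
    calc |2 * π * k * x + 0| = 2 * π * k * |x| := by
          rw [add_zero, abs_mul, abs_of_nonneg (by positivity)]
      _ ≤ 2 * π * N * (1 / (8 * N)) := by gcongr
      _ = π / 4 := by field_simp; ring
  rw [mul_comm]
  exact mul_le_mul_of_nonneg_left (sqrt_two_div_two_le_cos harg) (hb k)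

lemma exp_div_le_integral_exp_cosSum {N : ℕ} (hN : 1 ≤ N) {b : ℕ → ℝ} (hb : ∀ k, 0 ≤ b k)
    (κ : ℝ) : exp (κ + √2 / 2 * ∑ k ∈ Icc 1 N, b k) / (4 * N)
      ≤ ∫ x in (0:ℝ)..1, exp (κ + cosSum N b 0 x) := by
  have hN' : (1 : ℝ) ≤ N := by exact_mod_cast hN
  have h := mul_le_integral_of_periodic (f := fun x => exp (κ + cosSum N b 0 x))
    (by have := continuous_cosSum N b 0; fun_prop)
    ((cosSum_periodic N b 0).comp fun y => exp (κ + y)) (fun x => (exp_pos _).le)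
    (l := 1 / (8 * N)) (by positivity) (by rw [div_le_div_iff₀ (by positivity) two_pos]; linarith)
    (m := exp (κ + √2 / 2 * ∑ k ∈ Icc 1 N, b k)) fun x hx =>
      exp_le_exp.2 (by linarith [sqrt_two_div_two_mul_sum_le_cosSum hb (abs_le.2 hx)])
  convert h using 1
  field_simp
  ring

/-- `trialCoeff D κ k = √2 a_k` is the coefficient of `cos (2πkx)` in `φ_N`. -/
noncomputable def trialCoeff (D κ : ℝ) (k : ℕ) : ℝ := 2 * κ / (1 + D * (4 * π ^ 2 * (k : ℝ) ^ 2))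

lemma trialFunction_eq_const_add_cosSum (D κ : ℝ) (N : ℕ) :
    (fun x => κ + ∑ k ∈ Icc 1 N,
        (√2 * κ / (1 + D * (4 * π ^ 2 * (k : ℝ) ^ 2))) * (√2 * cos (2 * π * (k : ℝ) * x)))
      = fun x => κ + cosSum N (trialCoeff D κ) 0 x := by
  funext x
  congr 1
  refine sum_congr rfl fun k _ => ?_
  rw [trialCoeff, add_zero, ← mul_assoc, div_mul_eq_mul_div, mul_right_comm,
    mul_self_sqrt zero_le_two]

lemma trialCoeff_nonneg {D κ : ℝ} (hD : 0 ≤ D) (hκ : 0 ≤ κ) (k : ℕ) : 0 ≤ trialCoeff D κ k := by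
  unfold trialCoeff
  positivity

lemma sum_trialCoeff_energy {D : ℝ} (hD : 0 ≤ D) (κ : ℝ) (N : ℕ) :
    ∑ k ∈ Icc 1 N, (1 + D * (4 * π ^ 2 * (k : ℝ) ^ 2)) * trialCoeff D κ k ^ 2 / 4
      = κ ^ 2 * ∑ k ∈ Icc 1 N, 1 / (1 + D * (4 * π ^ 2 * (k : ℝ) ^ 2)) := by
  rw [mul_sum]
  refine sum_congr rfl fun k _ => ?_
  have : 0 < 1 + D * (4 * π ^ 2 * (k : ℝ) ^ 2) := by positivity
  rw [trialCoeff]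
  field_simp
  ring

lemma sqrt_two_div_two_mul_sum_trialCoeff (D κ : ℝ) (N : ℕ) :
    √2 / 2 * ∑ k ∈ Icc 1 N, trialCoeff D κ k
      = √2 * κ * ∑ k ∈ Icc 1 N, 1 / (1 + D * (4 * π ^ 2 * (k : ℝ) ^ 2)) := by
  rw [mul_sum, mul_sum]
  refine sum_congr rfl fun k _ => ?_
  rw [trialCoeff]
  ring

lemma card_div_le_sum_one_div {D : ℝ} (hD : 0 ≤ D) (N : ℕ) :
    N / (1 + D * (4 * π ^ 2 * (N : ℝ) ^ 2))
      ≤ ∑ k ∈ Icc 1 N, 1 / (1 + D * (4 * π ^ 2 * (k : ℝ) ^ 2)) := by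
  have h := card_nsmul_le_sum (Icc 1 N) (fun k : ℕ => 1 / (1 + D * (4 * π ^ 2 * (k : ℝ) ^ 2)))
    (1 / (1 + D * (4 * π ^ 2 * (N : ℝ) ^ 2))) fun k hk => by
      have hkN : (k : ℝ) ≤ N := by exact_mod_cast (mem_Icc.1 hk).2
      gcongr
  rwa [Nat.card_Icc, Nat.add_sub_cancel, nsmul_eq_mul, ← div_eq_mul_one_div] at h

/-- Explicit upper bound for the trial function
`φ_N(x) = κ + Σ_{k=1}^N (√2κ/(1+Dμ_k))·√2 cos(2πkx)` with `μ_k = 4π²k²`: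
`J(φ_N) ≤ −κ²/2 − κ²(√2−1)N/(1+Dμ_N) + κ log(4N)`. -/
theorem stmt7 (D κ : ℝ) (hD : 0 < D) (hκ : 0 < κ) (N : ℕ) (hN : 1 ≤ N) :
    J D κ (fun x => κ + ∑ k ∈ Finset.Icc 1 N,
        (Real.sqrt 2 * κ / (1 + D * (4 * π ^ 2 * (k : ℝ) ^ 2))) *
          (Real.sqrt 2 * Real.cos (2 * π * (k : ℝ) * x)))
      ≤ -κ ^ 2 / 2 - κ ^ 2 * (Real.sqrt 2 - 1) * (N : ℝ) / (1 + D * (4 * π ^ 2 * (N : ℝ) ^ 2))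
        + κ * Real.log (4 * (N : ℝ)) := by
  have hlog : κ + √2 * κ * ∑ k ∈ Icc 1 N, 1 / (1 + D * (4 * π ^ 2 * (k : ℝ) ^ 2)) - log (4 * N)
      ≤ log (∫ x in (0:ℝ)..1, exp (κ + cosSum N (trialCoeff D κ) 0 x)) := by
    have h4N : (0 : ℝ) < 4 * N := by positivity
    rw [← sqrt_two_div_two_mul_sum_trialCoeff, ← log_exp (κ + _), ← log_div (exp_ne_zero _) h4N.ne']
    exact log_le_log (by positivity)
      (exp_div_le_integral_exp_cosSum hN (trialCoeff_nonneg hD.le hκ.le) κ)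
  have hSN := card_div_le_sum_one_div hD.le N
  have hsqrt : (0 : ℝ) ≤ √2 - 1 := sub_nonneg.2 (one_le_sqrt.2 one_le_two)
  rw [trialFunction_eq_const_add_cosSum, J_const_add_cosSum, sum_trialCoeff_energy hD.le κ]
  linear_combination mul_le_mul_of_nonneg_left hlog hκ.le
    + mul_le_mul_of_nonneg_left hSN (mul_nonneg hsqrt (sq_nonneg κ))
end

section
/- Let λ₁ > λ₂ be two consecutive real numbers, M > 0, and (β_k) a square-summable real sequence with β₁, β₂ ≠ 0 associated to a strictly decreasing sequence (λ_k). Then the function F(ν) = Σ_k β_k²/(λ_k − ν) is continuous and strictly monotone increasing on (λ₂, λ₁), tends to −∞ as ν ↓ λ₂ and to +∞ as ν ↑ λ₁; hence the equation F(ν) = 1/M has exactly one solution ν in the open interval (λ₂, λ₁). Moreover, if the sequence (λ_k with β_k ≠ 0) is finite, there is exactly one solution ν < min{λ_k : β_k ≠ 0}, and no solution ν > max{λ_k : β_k ≠ 0}. -/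
/-!
Each term `β_k² / (λ_k − ν)` increases in `ν` on either side of its pole, and since `λ_k → −∞` the
poles are isolated, so the series converges uniformly near any `ν₀` that is not a pole with
`β_k ≠ 0`. Hence `F` is continuous and strictly increasing on every interval free of such poles,
and near a pole `λ_j` it is `β_j² / (λ_j − ν)` plus a function continuous at `λ_j`, which gives the
infinite one-sided limits. The intermediate value theorem then yields the solutions, unique by
strict monotonicity; to the right of all poles every term is nonpositive.
-/

open Real Filter

/-- The eigenvalue function `F(ν) = Σ_k β_k²/(λ_k − ν)`. -/
noncomputable def F (lam β : ℕ → ℝ) (ν : ℝ) : ℝ := ∑' k, (β k) ^ 2 / (lam k - ν)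

open Set Topology Function

theorem StrictMonoOn.existsUnique_eq_of_eventually {α δ : Type*}
    [ConditionallyCompleteLinearOrder α] [TopologicalSpace α] [OrderTopology α]
    [DenselyOrdered α] [LinearOrder δ] [TopologicalSpace δ] [OrderClosedTopology δ]
    {f : α → δ} {s : Set α} {la lb : Filter α} [la.NeBot] [lb.NeBot] {c : δ}
    (hmono : StrictMonoOn f s) (hf : ContinuousOn f s) (hs : s.OrdConnected)
    (hsa : s ∈ la) (hsb : s ∈ lb) (ha : ∀ᶠ x in la, f x < c) (hb : ∀ᶠ x in lb, c < f x) :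
    ∃! x, x ∈ s ∧ f x = c := by
  obtain ⟨a, hfa, has⟩ := (ha.and hsa).exists
  obtain ⟨b, hfb, hbs⟩ := (hb.and hsb).exists
  have hab : a ≤ b := ((hmono.lt_iff_lt has hbs).1 (hfa.trans hfb)).le
  obtain ⟨x, hx, hfx⟩ := intermediate_value_Icc hab (hf.mono (hs.out has hbs)) ⟨hfa.le, hfb.le⟩
  exact ⟨x, ⟨hs.out has hbs hx, hfx⟩, fun y ⟨hy, hfy⟩ =>
    hmono.injOn hy (hs.out has hbs hx) (hfy.trans hfx.symm)⟩

theorem div_sub_lt_div_sub {c L x y : ℝ} (hc : 0 < c) (hxy : x < y) (hL : L ∉ Icc x y) :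
    c / (L - x) < c / (L - y) := by
  have hprod : 0 < (L - x) * (L - y) := by
    by_cases hLx : L < x
    · exact mul_pos_of_neg_of_neg (by linarith) (by linarith)
    · have hyL : y < L := lt_of_not_ge fun hLy => hL ⟨le_of_not_gt hLx, hLy⟩
      exact mul_pos (by linarith) (by linarith)
  have hx : L - x ≠ 0 := left_ne_zero_of_mul hprod.ne'
  have hy : L - y ≠ 0 := right_ne_zero_of_mul hprod.ne'
  rw [← sub_pos, show c / (L - y) - c / (L - x) = c * (y - x) / ((L - x) * (L - y)) by
    field_simp; ring]
  exact div_pos (mul_pos hc (sub_pos.2 hxy)) hprod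

theorem tendsto_div_sub_nhdsLT {c : ℝ} (hc : 0 < c) (L : ℝ) :
    Tendsto (fun ν => c / (L - ν)) (𝓝[<] L) atTop := by
  have h : Tendsto (fun ν => L - ν) (𝓝[<] L) (𝓝[>] 0) :=
    ((continuous_sub_left L).tendsto' L 0 (sub_self L)).inf
      (tendsto_principal_principal.2 fun _ hν => mem_Ioi.2 (sub_pos.2 hν))
  simpa only [div_eq_mul_inv, comp_def] using (tendsto_inv_nhdsGT_zero.comp h).const_mul_atTop hc

theorem tendsto_div_sub_nhdsGT {c : ℝ} (hc : 0 < c) (L : ℝ) :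
    Tendsto (fun ν => c / (L - ν)) (𝓝[>] L) atBot := by
  have h : Tendsto (fun ν => L - ν) (𝓝[>] L) (𝓝[<] 0) :=
    ((continuous_sub_left L).tendsto' L 0 (sub_self L)).inf
      (tendsto_principal_principal.2 fun _ hν => mem_Iio.2 (sub_neg.2 hν))
  simpa only [div_eq_mul_inv, comp_def] using (tendsto_inv_nhdsLT_zero.comp h).const_mul_atBot hc

theorem Filter.Tendsto.exists_pos_le_abs_sub {lam : ℕ → ℝ} (hbot : Tendsto lam atTop atBot)
    {p : ℕ → Prop} {ν₀ : ℝ} (h : ∀ k, p k → lam k ≠ ν₀) :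
    ∃ δ > 0, ∀ k, p k → δ ≤ |lam k - ν₀| := by
  classical
  obtain ⟨N, hN⟩ := eventually_atTop.1 (hbot.eventually (eventually_le_atBot (ν₀ - 1)))
  have hsmall : ∀ᶠ δ in 𝓝 (0 : ℝ), δ ≤ 1 ∧ ∀ k ∈ (Finset.range N).filter p, δ ≤ |lam k - ν₀| :=
    (eventually_le_nhds one_pos).and <| (eventually_all_finset _).2 fun k hk =>
      eventually_le_nhds (abs_pos.2 (sub_ne_zero.2 (h k (Finset.mem_filter.1 hk).2)))
  obtain ⟨δ, ⟨hδ1, hδN⟩, hδ⟩ := ((hsmall.filter_mono nhdsWithin_le_nhds).and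
    (self_mem_nhdsWithin : Ioi (0 : ℝ) ∈ 𝓝[>] 0)).exists
  refine ⟨δ, hδ, fun k hk => ?_⟩
  by_cases hkN : k < N
  · exact hδN k (Finset.mem_filter.2 ⟨Finset.mem_range.2 hkN, hk⟩)
  · have := hN k (not_lt.1 hkN)
    rw [abs_sub_comm, abs_of_nonneg (by linarith)]
    linarith

section F

variable {lam β : ℕ → ℝ}

theorem summable_sq_div_sub (hsum : Summable fun k => β k ^ 2)
    (hbot : Tendsto lam atTop atBot) (ν : ℝ) :
    Summable fun k => β k ^ 2 / (lam k - ν) := by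
  refine hsum.of_norm_bounded_eventually ?_
  rw [Nat.cofinite_eq_atTop]
  filter_upwards [hbot.eventually (eventually_le_atBot (ν - 1))] with k hk
  have h1 : 1 ≤ |lam k - ν| := by
    rw [abs_sub_comm, abs_of_nonneg (by linarith)]; linarith
  rw [Real.norm_eq_abs, abs_div, abs_of_nonneg (sq_nonneg _)]
  exact div_le_self (sq_nonneg _) h1

theorem continuousAt_F (hsum : Summable fun k => β k ^ 2) (hbot : Tendsto lam atTop atBot)
    {ν₀ : ℝ} (h : ∀ k, β k ≠ 0 → lam k ≠ ν₀) : ContinuousAt (F lam β) ν₀ := by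
  obtain ⟨δ, hδ, hgap⟩ := hbot.exists_pos_le_abs_sub h
  have hball : ∀ k, β k ≠ 0 → ∀ ν ∈ Metric.ball ν₀ (δ / 2), δ / 2 ≤ |lam k - ν| := by
    intro k hk ν hν
    rw [Metric.mem_ball, Real.dist_eq] at hν
    linarith [hgap k hk, abs_sub_le (lam k) ν ν₀]
  have hcont : ContinuousOn (F lam β) (Metric.ball ν₀ (δ / 2)) := by
    refine continuousOn_tsum (u := fun k => β k ^ 2 / (δ / 2)) (fun k => ?_)
      (hsum.div_const _) (fun k ν hν => ?_)
    · by_cases hk : β k = 0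
      · simpa [hk] using continuousOn_const
      · exact continuousOn_const.div (continuousOn_const.sub continuousOn_id) fun ν hν =>
          abs_pos.1 ((half_pos hδ).trans_le (hball k hk ν hν))
    · by_cases hk : β k = 0
      · simp [hk]
      · rw [norm_div, Real.norm_eq_abs, Real.norm_eq_abs, abs_of_nonneg (sq_nonneg _)]
        exact div_le_div_of_nonneg_left (sq_nonneg _) (half_pos hδ) (hball k hk ν hν)
  exact hcont.continuousAt (Metric.isOpen_ball.mem_nhds (Metric.mem_ball_self (half_pos hδ)))

theorem continuousOn_F (hsum : Summable fun k => β k ^ 2) (hbot : Tendsto lam atTop atBot)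
    {s : Set ℝ} (hs : ∀ k, β k ≠ 0 → lam k ∉ s) : ContinuousOn (F lam β) s := fun _ hν =>
  (continuousAt_F hsum hbot fun k hk hkν => hs k hk (hkν ▸ hν)).continuousWithinAt

theorem strictMonoOn_F (hsum : Summable fun k => β k ^ 2) (hbot : Tendsto lam atTop atBot)
    {s : Set ℝ} (hs : s.OrdConnected) (hgap : ∀ k, β k ≠ 0 → lam k ∉ s) {j : ℕ} (hj : β j ≠ 0) :
    StrictMonoOn (F lam β) s := by
  intro x hx y hy hxy
  have hterm : ∀ k, β k ≠ 0 → β k ^ 2 / (lam k - x) < β k ^ 2 / (lam k - y) := fun k hk =>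
    div_sub_lt_div_sub (by positivity) hxy fun hk' => hgap k hk (hs.out hx hy hk')
  refine Summable.tsum_lt_tsum (i := j) (fun k => ?_) (hterm j hj)
    (summable_sq_div_sub hsum hbot x) (summable_sq_div_sub hsum hbot y)
  by_cases hk : β k = 0
  · simp [hk]
  · exact (hterm k hk).le

theorem F_nonpos {ν : ℝ} (h : ∀ k, β k ≠ 0 → lam k ≤ ν) : F lam β ν ≤ 0 :=
  tsum_nonpos fun k => by
    by_cases hk : β k = 0
    · simp [hk]
    · exact div_nonpos_of_nonneg_of_nonpos (sq_nonneg _) (sub_nonpos.2 (h k hk))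

theorem F_eq_add_F_update (hsum : Summable fun k => β k ^ 2) (hbot : Tendsto lam atTop atBot)
    (j : ℕ) (ν : ℝ) : F lam β ν = β j ^ 2 / (lam j - ν) + F lam (update β j 0) ν := by
  rw [F, (summable_sq_div_sub hsum hbot ν).tsum_eq_add_tsum_ite j, F]
  congr 1
  refine tsum_congr fun k => ?_
  rcases eq_or_ne k j with rfl | hk <;> simp [*]

theorem continuousAt_F_update (hsum : Summable fun k => β k ^ 2)
    (hbot : Tendsto lam atTop atBot) (hinj : Injective lam) (j : ℕ) :
    ContinuousAt (F lam (update β j 0)) (lam j) := by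
  refine continuousAt_F ((hsum.update j 0).congr fun k => ?_) hbot fun k hk => hinj.ne ?_
  · rcases eq_or_ne k j with rfl | hk <;> simp [*]
  · rintro rfl
    simp at hk

theorem tendsto_F_nhdsLT (hsum : Summable fun k => β k ^ 2) (hbot : Tendsto lam atTop atBot)
    (hinj : Injective lam) {j : ℕ} (hj : β j ≠ 0) :
    Tendsto (F lam β) (𝓝[<] lam j) atTop := by
  rw [funext (F_eq_add_F_update hsum hbot j)]
  exact (tendsto_div_sub_nhdsLT (by positivity) _).atTop_add
    ((continuousAt_F_update hsum hbot hinj j).tendsto.mono_left nhdsWithin_le_nhds)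

theorem tendsto_F_nhdsGT (hsum : Summable fun k => β k ^ 2) (hbot : Tendsto lam atTop atBot)
    (hinj : Injective lam) {j : ℕ} (hj : β j ≠ 0) :
    Tendsto (F lam β) (𝓝[>] lam j) atBot := by
  rw [funext (F_eq_add_F_update hsum hbot j)]
  exact (tendsto_div_sub_nhdsGT (by positivity) _).atBot_add
    ((continuousAt_F_update hsum hbot hinj j).tendsto.mono_left nhdsWithin_le_nhds)

theorem tendsto_F_atBot (hfin : {k | β k ≠ 0}.Finite) : Tendsto (F lam β) atBot (𝓝 0) := by
  have hF : F lam β = fun ν => ∑ k ∈ hfin.toFinset, β k ^ 2 / (lam k - ν) :=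
    funext fun ν => tsum_eq_sum fun k hk => by simp_all
  rw [hF]
  simpa [sub_eq_add_neg] using tendsto_finsetSum hfin.toFinset fun k _ =>
    tendsto_const_nhds.div_atTop (tendsto_atTop_add_const_left _ (lam k) tendsto_neg_atBot_atTop)

theorem F_nonpos_of_sSup_le (hfin : {k | β k ≠ 0}.Finite) {ν : ℝ}
    (hν : sSup (lam '' {k | β k ≠ 0}) ≤ ν) : F lam β ν ≤ 0 :=
  F_nonpos fun _ hk => (le_csSup (hfin.image lam).bddAbove (mem_image_of_mem lam hk)).trans hν

theorem existsUnique_F_eq_of_lt_sInf (hsum : Summable fun k => β k ^ 2)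
    (hbot : Tendsto lam atTop atBot) (hinj : Injective lam) (hfin : {k | β k ≠ 0}.Finite)
    {j : ℕ} (hj : β j ≠ 0) {c : ℝ} (hc : 0 < c) :
    ∃! ν : ℝ, ν < sInf (lam '' {k | β k ≠ 0}) ∧ F lam β ν = c := by
  obtain ⟨k₀, hk₀, hk₀_eq⟩ := (Nonempty.image lam ⟨j, hj⟩).csInf_mem (hfin.image lam)
  have hbelow : ∀ k, β k ≠ 0 → lam k ∉ Iio (lam k₀) := fun k hk =>
    not_lt.2 (hk₀_eq ▸ csInf_le (hfin.image lam).bddBelow (mem_image_of_mem lam hk))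
  rw [← hk₀_eq]
  exact (strictMonoOn_F hsum hbot ordConnected_Iio hbelow hj).existsUnique_eq_of_eventually
    (continuousOn_F hsum hbot hbelow) ordConnected_Iio (Iio_mem_atBot _) self_mem_nhdsWithin
    ((tendsto_F_atBot hfin).eventually_lt_const hc)
    ((tendsto_F_nhdsLT hsum hbot hinj hk₀).eventually_gt_atTop _)

end F

/-- Interlacing of nonlocal eigenvalues: on the interval between two consecutive
local eigenvalues `λ₁ = lam 0 > λ₂ = lam 1` (with `β₀, β₁ ≠ 0`), the function
`F(ν) = Σ β_k²/(λ_k − ν)` is continuous, strictly increasing, tends to `−∞` at the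
left endpoint and `+∞` at the right endpoint, hence `F(ν) = 1/M` has exactly one
solution there.  If only finitely many `β_k` are nonzero, there is exactly one
solution below `min{λ_k : β_k ≠ 0}` and none above `max{λ_k : β_k ≠ 0}`. -/
theorem stmt11 (M : ℝ) (hM : 0 < M)
    (lam : ℕ → ℝ) (hanti : StrictAnti lam) (hbot : Tendsto lam atTop atBot)
    (β : ℕ → ℝ) (hsum : Summable (fun k => (β k) ^ 2))
    (hβ0 : β 0 ≠ 0) (hβ1 : β 1 ≠ 0) :
    ContinuousOn (F lam β) (Set.Ioo (lam 1) (lam 0)) ∧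
    StrictMonoOn (F lam β) (Set.Ioo (lam 1) (lam 0)) ∧
    Tendsto (F lam β) (nhdsWithin (lam 1) (Set.Ioi (lam 1))) atBot ∧
    Tendsto (F lam β) (nhdsWithin (lam 0) (Set.Iio (lam 0))) atTop ∧
    (∃! ν : ℝ, ν ∈ Set.Ioo (lam 1) (lam 0) ∧ F lam β ν = 1 / M) ∧
    ({k | β k ≠ 0}.Finite →
      (∃! ν : ℝ, ν < sInf (lam '' {k | β k ≠ 0}) ∧ F lam β ν = 1 / M) ∧
      ∀ ν : ℝ, sSup (lam '' {k | β k ≠ 0}) < ν → F lam β ν ≠ 1 / M) := by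
  have hinj := hanti.injective
  have hgap : ∀ k, β k ≠ 0 → lam k ∉ Ioo (lam 1) (lam 0) := by
    rintro (_ | k) _ ⟨h1, h0⟩
    · exact h0.false
    · exact (hanti.antitone (Nat.le_add_left 1 k)).not_gt h1
  have hcont := continuousOn_F hsum hbot hgap
  have hmono := strictMonoOn_F hsum hbot ordConnected_Ioo hgap hβ0
  have hleft := tendsto_F_nhdsGT hsum hbot hinj hβ1
  have hright := tendsto_F_nhdsLT hsum hbot hinj hβ0
  have h10 : lam 1 < lam 0 := hanti zero_lt_one
  refine ⟨hcont, hmono, hleft, hright,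
    hmono.existsUnique_eq_of_eventually hcont ordConnected_Ioo (Ioo_mem_nhdsGT h10)
      (Ioo_mem_nhdsLT h10) (hleft.eventually_lt_atBot _) (hright.eventually_gt_atTop _),
    fun hfin => ⟨existsUnique_F_eq_of_lt_sInf hsum hbot hinj hfin hβ0 (one_div_pos.2 hM),
      fun ν hν => ((F_nonpos_of_sSup_le hfin hν.le).trans_lt (one_div_pos.2 hM)).ne⟩⟩
end
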